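/- arXiv:2011.13721 — 8 statements merged into one kernel-verified Lean document; each statement's English description precedes it below -/
import Mathlib

section
/- Let f be a Boolean function on n variables and f̃ a function with |{x : f(x) ≠ f̃(x)}| ≤ ε·2^n. Suppose f̃ = ⋁_{k=1}^K r_k where the r_k are pairwise disjoint Boolean functions (no two share a model), and suppose there is Δ > 0 such that for every k, ||r_k⁻¹(1) ∩ f⁻¹(1)| − |r_k⁻¹(1) ∩ f⁻¹(0)|| ≤ Δ. Then K ≥ (|f⁻¹(1)| − ε·2^n)/Δ. -/
/-- Lower bound on the size of a disjoint cover of a weak ε-approximation,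
via discrepancy: if `|{x : f x ≠ f̃ x}| ≤ ε·2^n`, `f̃ = ⋁_{k<K} r k` with
pairwise disjoint `r k`, and each `r k` has raw discrepancy at most `Δ` on `f`,
then `K ≥ (|f⁻¹(1)| − ε·2^n)/Δ`. -/
theorem cover_size_bound_weak_approx (n K : ℕ) (f ftilde : (Fin n → Bool) → Bool)
    (r : Fin K → (Fin n → Bool) → Bool) (ε Δ : ℝ) (hΔ : 0 < Δ)
    (happrox : ((Finset.univ.filter fun x => f x ≠ ftilde x).card : ℝ) ≤ ε * 2 ^ n)
    (hcover : ∀ x, ftilde x = true ↔ ∃ k, r k x = true)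
    (hdisj : ∀ i j, i ≠ j → ∀ x, ¬(r i x = true ∧ r j x = true))
    (hdisc : ∀ k,
      |((Finset.univ.filter fun x => r k x = true ∧ f x = true).card : ℝ) -
        ((Finset.univ.filter fun x => r k x = true ∧ f x = false).card : ℝ)| ≤ Δ) :
    (K : ℝ) ≥ (((Finset.univ.filter fun x => f x = true).card : ℝ) - ε * 2 ^ n) / Δ := by
  classical
  have hA : (Finset.univ.filter fun x => f x = true).card ≤
      (Finset.univ.filter fun x => f x = true ∧ ftilde x = false).card +
      ∑ k, (Finset.univ.filter fun x => r k x = true ∧ f x = true).card := by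
    calc (Finset.univ.filter fun x => f x = true).card
        ≤ ((Finset.univ.filter fun x => f x = true ∧ ftilde x = false) ∪
          (Finset.univ.biUnion fun k =>
            Finset.univ.filter fun x => r k x = true ∧ f x = true)).card := by
          apply Finset.card_le_card
          intro x hx
          simp only [Finset.mem_filter, Finset.mem_union, Finset.mem_biUnion,
            Finset.mem_univ, true_and] at *
          by_cases h : ftilde x = true
          · obtain ⟨k, hk⟩ := (hcover x).1 h
            exact Or.inr ⟨k, hk, hx⟩
          · exact Or.inl ⟨hx, by simpa using h⟩
      _ ≤ _ := le_trans (Finset.card_union_le _ _)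
          (by gcongr; exact Finset.card_biUnion_le)
  have hB : ∑ k, (Finset.univ.filter fun x => r k x = true ∧ f x = false).card ≤
      (Finset.univ.filter fun x => f x = false ∧ ftilde x = true).card := by
    rw [← Finset.card_biUnion]
    · apply Finset.card_le_card
      intro x hx
      simp only [Finset.mem_biUnion, Finset.mem_filter, Finset.mem_univ, true_and] at *
      obtain ⟨k, hk, hf⟩ := hx
      exact ⟨hf, (hcover x).2 ⟨k, hk⟩⟩
    · intro i _ j _ hij
      simp only [Finset.disjoint_left, Finset.mem_filter, Finset.mem_univ, true_and]
      rintro x ⟨hi, _⟩ ⟨hj, _⟩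
      exact hdisj i j hij x ⟨hi, hj⟩
  have hC : (Finset.univ.filter fun x => f x = true ∧ ftilde x = false).card +
      (Finset.univ.filter fun x => f x = false ∧ ftilde x = true).card ≤
      (Finset.univ.filter fun x => f x ≠ ftilde x).card := by
    rw [← Finset.card_union_of_disjoint]
    · apply Finset.card_le_card
      intro x hx
      simp only [Finset.mem_union, Finset.mem_filter, Finset.mem_univ, true_and] at *
      rcases hx with ⟨h1, h2⟩ | ⟨h1, h2⟩ <;> simp [h1, h2]
    · simp only [Finset.disjoint_left, Finset.mem_filter, Finset.mem_univ, true_and]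
      rintro x ⟨h1, _⟩ ⟨h2, _⟩
      simp [h1] at h2
  have hsum : ∑ k, ((Finset.univ.filter fun x => r k x = true ∧ f x = true).card : ℝ) ≤
      K * Δ + ∑ k, ((Finset.univ.filter fun x => r k x = true ∧ f x = false).card : ℝ) := by
    have h1 : ∑ k, ((Finset.univ.filter fun x => r k x = true ∧ f x = true).card : ℝ) ≤
        ∑ k : Fin K, (Δ +
          ((Finset.univ.filter fun x => r k x = true ∧ f x = false).card : ℝ)) :=
      Finset.sum_le_sum fun k _ => by linarith [(abs_le.mp (hdisc k)).1, (abs_le.mp (hdisc k)).2]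
    rw [Finset.sum_add_distrib, Finset.sum_const, Finset.card_univ, Fintype.card_fin,
      nsmul_eq_mul] at h1
    exact h1
  have hA' := (Nat.cast_le (α := ℝ)).2 hA
  have hB' := (Nat.cast_le (α := ℝ)).2 hB
  have hC' := (Nat.cast_le (α := ℝ)).2 hC
  push_cast at hA' hB' hC'
  rw [ge_iff_le, div_le_iff₀ hΔ]
  linarith
end

section
/- Let f be a Boolean function on n variables and f̃ a function with |{x : f(x) ≠ f̃(x)}| ≤ ε·|f⁻¹(1)|. Suppose f̃ = ⋁_{k=1}^K r_k where the r_k are pairwise disjoint Boolean functions, and suppose there is Δ > 0 with ||r_k⁻¹(1) ∩ f⁻¹(1)| − |r_k⁻¹(1) ∩ f⁻¹(0)|| ≤ Δ for all k. Then K ≥ (1−ε)·|f⁻¹(1)|/Δ. -/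
/-- Lower bound on the size of a disjoint cover of a strong ε-approximation:
if `|{x : f x ≠ f̃ x}| ≤ ε·|f⁻¹(1)|`, `f̃ = ⋁_{k<K} r k` with pairwise disjoint
`r k`, and each `r k` has raw discrepancy at most `Δ` on `f`, then
`K ≥ (1−ε)·|f⁻¹(1)|/Δ`. -/
theorem cover_size_bound_strong_approx (n K : ℕ) (f ftilde : (Fin n → Bool) → Bool)
    (r : Fin K → (Fin n → Bool) → Bool) (ε Δ : ℝ) (hΔ : 0 < Δ)
    (happrox : ((Finset.univ.filter fun x => f x ≠ ftilde x).card : ℝ) ≤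
      ε * ((Finset.univ.filter fun x => f x = true).card : ℝ))
    (hcover : ∀ x, ftilde x = true ↔ ∃ k, r k x = true)
    (hdisj : ∀ i j, i ≠ j → ∀ x, ¬(r i x = true ∧ r j x = true))
    (hdisc : ∀ k,
      |((Finset.univ.filter fun x => r k x = true ∧ f x = true).card : ℝ) -
        ((Finset.univ.filter fun x => r k x = true ∧ f x = false).card : ℝ)| ≤ Δ) :
    (K : ℝ) ≥ (1 - ε) * ((Finset.univ.filter fun x => f x = true).card : ℝ) / Δ := by
  classical
  set F1 := Finset.univ.filter fun x : Fin n → Bool => f x = true with hF1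
  set A := Finset.univ.filter fun x : Fin n → Bool => ftilde x = true ∧ f x = true with hA
  set B := Finset.univ.filter fun x : Fin n → Bool => ftilde x = true ∧ f x = false with hB
  set C := Finset.univ.filter fun x : Fin n → Bool => f x = true ∧ ftilde x = false with hC
  set E := Finset.univ.filter fun x : Fin n → Bool => f x ≠ ftilde x with hE
  -- A is the disjoint union of the pieces (r k = true ∧ f = true)
  have hAbi : A = Finset.univ.biUnion
      (fun k => Finset.univ.filter fun x => r k x = true ∧ f x = true) := by
    ext x
    simp only [hA, Finset.mem_filter, Finset.mem_biUnion, Finset.mem_univ, true_and, hcover]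
    constructor
    · rintro ⟨⟨k, hk⟩, hf⟩; exact ⟨k, hk, hf⟩
    · rintro ⟨k, hk, hf⟩; exact ⟨⟨k, hk⟩, hf⟩
  have hBbi : B = Finset.univ.biUnion
      (fun k => Finset.univ.filter fun x => r k x = true ∧ f x = false) := by
    ext x
    simp only [hB, Finset.mem_filter, Finset.mem_biUnion, Finset.mem_univ, true_and, hcover]
    constructor
    · rintro ⟨⟨k, hk⟩, hf⟩; exact ⟨k, hk, hf⟩
    · rintro ⟨k, hk, hf⟩; exact ⟨⟨k, hk⟩, hf⟩
  have hdisjA : ∀ i ∈ Finset.univ, ∀ j ∈ Finset.univ, i ≠ j →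
      Disjoint (Finset.univ.filter fun x => r i x = true ∧ f x = true)
        (Finset.univ.filter fun x => r j x = true ∧ f x = true) := by
    intro i _ j _ hij
    rw [Finset.disjoint_left]
    intro x hx hx'
    simp only [Finset.mem_filter] at hx hx'
    exact hdisj i j hij x ⟨hx.2.1, hx'.2.1⟩
  have hdisjB : ∀ i ∈ Finset.univ, ∀ j ∈ Finset.univ, i ≠ j →
      Disjoint (Finset.univ.filter fun x => r i x = true ∧ f x = false)
        (Finset.univ.filter fun x => r j x = true ∧ f x = false) := by
    intro i _ j _ hij
    rw [Finset.disjoint_left]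
    intro x hx hx'
    simp only [Finset.mem_filter] at hx hx'
    exact hdisj i j hij x ⟨hx.2.1, hx'.2.1⟩
  have hAcard : (A.card : ℝ) =
      ∑ k : Fin K, ((Finset.univ.filter fun x => r k x = true ∧ f x = true).card : ℝ) := by
    rw [hAbi, Finset.card_biUnion hdisjA]; push_cast; rfl
  have hBcard : (B.card : ℝ) =
      ∑ k : Fin K, ((Finset.univ.filter fun x => r k x = true ∧ f x = false).card : ℝ) := by
    rw [hBbi, Finset.card_biUnion hdisjB]; push_cast; rfl
  -- card A ≤ K * Δ + card B
  have hAB : (A.card : ℝ) ≤ K * Δ + B.card := by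
    rw [hAcard, hBcard]
    have : ∀ k : Fin K,
        ((Finset.univ.filter fun x => r k x = true ∧ f x = true).card : ℝ) ≤
        Δ + ((Finset.univ.filter fun x => r k x = true ∧ f x = false).card : ℝ) := by
      intro k
      have := abs_le.mp (hdisc k)
      linarith [this.2]
    calc ∑ k : Fin K, ((Finset.univ.filter fun x => r k x = true ∧ f x = true).card : ℝ)
        ≤ ∑ k : Fin K, (Δ + ((Finset.univ.filter fun x => r k x = true ∧ f x = false).card : ℝ)) :=
          Finset.sum_le_sum fun k _ => this k
      _ = K * Δ + ∑ k : Fin K, ((Finset.univ.filter fun x => r k x = true ∧ f x = false).card : ℝ) := by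
          rw [Finset.sum_add_distrib, Finset.sum_const, Finset.card_univ]
          simp [nsmul_eq_mul]
  -- card F1 = card A + card C
  have hF1split : F1.card = A.card + C.card := by
    have : A ∪ C = F1 := by
      ext x
      simp only [hA, hC, hF1, Finset.mem_union, Finset.mem_filter, Finset.mem_univ, true_and]
      cases hft : ftilde x <;> cases hf : f x <;> simp
    rw [← this, Finset.card_union_of_disjoint]
    rw [Finset.disjoint_left]
    intro x hx hx'
    simp only [hA, hC, Finset.mem_filter] at hx hx'
    simp [hx.2.1] at hx'
  -- B ∪ C ⊆ E, disjoint
  have hBCE : B.card + C.card ≤ E.card := by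
    have hsub : B ∪ C ⊆ E := by
      intro x hx
      simp only [hB, hC, hE, Finset.mem_union, Finset.mem_filter, Finset.mem_univ, true_and] at hx ⊢
      rcases hx with ⟨h1, h2⟩ | ⟨h1, h2⟩ <;> simp [h1, h2]
    have hdisjBC : Disjoint B C := by
      rw [Finset.disjoint_left]
      intro x hx hx'
      simp only [hB, hC, Finset.mem_filter, Finset.mem_univ, true_and] at hx hx'
      simp [hx.2] at hx'
    calc B.card + C.card = (B ∪ C).card := (Finset.card_union_of_disjoint hdisjBC).symm
      _ ≤ E.card := Finset.card_le_card hsub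
  -- conclude
  have hKΔ : (1 - ε) * (F1.card : ℝ) ≤ K * Δ := by
    have h1 : (F1.card : ℝ) = (A.card : ℝ) + C.card := by exact_mod_cast hF1split
    have h2 : (B.card : ℝ) + C.card ≤ E.card := by exact_mod_cast hBCE
    have h3 : (E.card : ℝ) ≤ ε * F1.card := happrox
    linarith
  rw [ge_iff_le, div_le_iff₀ hΔ]
  linarith
end

section
/- Let H ∈ F_2^{m×n} be a parity check matrix such that every submatrix formed by at least n/3 columns of H has rank at least s, and let f be the characteristic function of the linear code defined by H. Let r = ρ₁ ∧ ρ₂ be a balanced rectangle over the n variables with r ≤ f (every model of r is a model of f). Then |r⁻¹(1)| ≤ 2^{n−2s}. -/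
/-!
Fix a model `x₀` of the rectangle. For any model `x`, the vector agreeing with `x` on `X₁`
and with `x₀` elsewhere is again a model, so `x - x₀` restricted to `X₁` lies in the kernel
of the column submatrix `H_{X₁}`; likewise for `X₂ = X₁ᶜ`. A model is determined by its two
restrictions, hence `|r⁻¹(1)| ≤ |ker H_{X₁}| · |ker H_{X₂}| ≤ 2^(|X₁| - s) · 2^(|X₂| - s)`,
both parts of a balanced partition having at least `n/3` columns.
-/

open Finset Matrix

theorem Finset.piecewise_rectangle_eq_true {ι α : Type*} [DecidableEq ι] {S : Finset ι}
    {ρ₁ ρ₂ : (ι → α) → Bool}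
    (hdep₁ : ∀ x y, (∀ i ∈ S, x i = y i) → ρ₁ x = ρ₁ y)
    (hdep₂ : ∀ x y, (∀ i ∉ S, x i = y i) → ρ₂ x = ρ₂ y) {x y : ι → α}
    (hx : ρ₁ x = true) (hy : ρ₂ y = true) :
    ρ₁ (S.piecewise x y) = true ∧ ρ₂ (S.piecewise x y) = true :=
  ⟨hdep₁ (S.piecewise x y) x (fun _ hi => S.piecewise_eq_of_mem _ _ hi) ▸ hx,
    hdep₂ (S.piecewise x y) y (fun _ hi => S.piecewise_eq_of_notMem _ _ hi) ▸ hy⟩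

variable {ι : Type*} [Fintype ι]

theorem Finset.card_le_card_image_restrict_mul {β : Type*} [DecidableEq ι] [DecidableEq β]
    (R : Finset (ι → β)) (S : Finset ι) :
    #R ≤ #(R.image S.restrict) * #(R.image Sᶜ.restrict) := by
  rw [← card_product]
  refine card_le_card_of_injOn (fun x => (S.restrict x, Sᶜ.restrict x))
    (fun x hx => mem_product.2 ⟨mem_image_of_mem _ hx, mem_image_of_mem _ hx⟩) ?_
  intro x _ y _ hxy
  simp only [Prod.mk.injEq] at hxy
  funext i
  by_cases hi : i ∈ S
  · exact congrFun hxy.1 ⟨i, hi⟩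
  · exact congrFun hxy.2 ⟨i, mem_compl.2 hi⟩

theorem Matrix.natCard_ker_mulVecLin {m K : Type*} [Field K] (M : Matrix m ι K) :
    Nat.card (LinearMap.ker M.mulVecLin) = Nat.card K ^ (Fintype.card ι - M.rank) := by
  have hrank_nullity := LinearMap.finrank_range_add_finrank_ker M.mulVecLin
  rw [Module.finrank_fintype_fun_eq_card] at hrank_nullity
  rw [Module.natCard_eq_pow_finrank (K := K), ← hrank_nullity, Matrix.rank,
    Nat.add_sub_cancel_left]

theorem Matrix.submatrix_mulVec_restrict {m α : Type*} [NonUnitalNonAssocSemiring α]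
    (A : Matrix m ι α) {S : Finset ι} {v : ι → α} (hv : ∀ i ∉ S, v i = 0) :
    A.submatrix id ((↑) : S → ι) *ᵥ S.restrict v = A *ᵥ v := by
  funext i
  simp only [mulVec, dotProduct, submatrix_apply, id_eq, Finset.restrict]
  rw [Finset.sum_coe_sort S (fun j => A i j * v j)]
  exact sum_subset (subset_univ S) fun j _ hj => by simp [hv j hj]

section Code

variable {m K : Type*} [DecidableEq ι] [DecidableEq K] (H : Matrix m ι K) {R : Finset (ι → K)}
  (S : Finset ι)

theorem Finset.card_image_restrict_le_natCard_ker [CommRing K] [Finite K]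
    (hcode : ∀ x ∈ R, H *ᵥ x = 0) (hmix : ∀ x ∈ R, ∀ y ∈ R, S.piecewise x y ∈ R) :
    #(R.image S.restrict) ≤ Nat.card (LinearMap.ker (H.submatrix id ((↑) : S → ι)).mulVecLin) := by
  rcases R.eq_empty_or_nonempty with rfl | ⟨x₀, hx₀⟩
  · simp
  -- `S.piecewise x x₀ - x₀` is a codeword supported on `S` whose restriction is `x - x₀`.
  have hker : ∀ x ∈ R, S.restrict x - S.restrict x₀ ∈
      LinearMap.ker (H.submatrix id ((↑) : S → ι)).mulVecLin := by
    intro x hx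
    have hsupp : ∀ i ∉ S, (S.piecewise x x₀ - x₀) i = 0 := fun i hi => by simp [hi]
    have hzero := H.submatrix_mulVec_restrict hsupp
    rw [mulVec_sub, hcode _ (hmix x hx x₀ hx₀), hcode x₀ hx₀, sub_zero] at hzero
    rw [LinearMap.mem_ker, mulVecLin_apply, ← hzero]
    congr 1
    funext j
    simp [j.2]
  rw [← Nat.card_eq_finsetCard]
  refine Nat.card_le_card_of_injective
    (fun u => ⟨u.1 - S.restrict x₀, ?_⟩) fun u v huv => Subtype.ext (by simpa using huv)
  obtain ⟨x, hx, hxu⟩ := mem_image.1 u.2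
  exact hxu ▸ hker x hx

theorem Finset.card_image_restrict_le_pow [Field K] [Finite K]
    (hcode : ∀ x ∈ R, H *ᵥ x = 0) (hmix : ∀ x ∈ R, ∀ y ∈ R, S.piecewise x y ∈ R) {s : ℕ}
    (hs : s ≤ (H.submatrix id ((↑) : S → ι)).rank) :
    #(R.image S.restrict) ≤ Nat.card K ^ (#S - s) := by
  refine (card_image_restrict_le_natCard_ker H S hcode hmix).trans ?_
  rw [natCard_ker_mulVecLin, Fintype.card_coe]
  exact Nat.pow_le_pow_right Nat.card_pos (by omega)

end Code

/-- If every submatrix of `H` formed by at least `n/3` columns has rank at least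
`s`, and `r = ρ₁ ∧ ρ₂` is a balanced rectangle entailing the characteristic
function of the linear code of `H`, then `r` has at most `2^(n−2s)` models. -/
theorem balanced_rectangle_in_code_small (m n s : ℕ)
    (H : Matrix (Fin m) (Fin n) (ZMod 2))
    (hgood : ∀ S : Finset (Fin n), 3 * S.card ≥ n →
      (H.submatrix id (Subtype.val : {j // j ∈ S} → Fin n)).rank ≥ s)
    (X₁ : Finset (Fin n)) (ρ₁ ρ₂ : (Fin n → ZMod 2) → Bool)
    (hbal₁ : n ≤ 3 * X₁.card) (hbal₂ : 3 * X₁.card ≤ 2 * n)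
    (hdep₁ : ∀ x y, (∀ i ∈ X₁, x i = y i) → ρ₁ x = ρ₁ y)
    (hdep₂ : ∀ x y, (∀ i ∉ X₁, x i = y i) → ρ₂ x = ρ₂ y)
    (hent : ∀ x, ρ₁ x = true → ρ₂ x = true → H.mulVec x = 0) :
    (Finset.univ.filter fun x => ρ₁ x = true ∧ ρ₂ x = true).card ≤ 2 ^ (n - 2 * s) := by
  set R := Finset.univ.filter fun x => ρ₁ x = true ∧ ρ₂ x = true
  have hmem : ∀ {x}, x ∈ R ↔ ρ₁ x = true ∧ ρ₂ x = true := by simp [R]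
  have hcode : ∀ x ∈ R, H *ᵥ x = 0 := fun x hx => hent x (hmem.1 hx).1 (hmem.1 hx).2
  have hmix₁ : ∀ x ∈ R, ∀ y ∈ R, X₁.piecewise x y ∈ R := fun x hx y hy =>
    hmem.2 (piecewise_rectangle_eq_true hdep₁ hdep₂ (hmem.1 hx).1 (hmem.1 hy).2)
  have hmix₂ : ∀ x ∈ R, ∀ y ∈ R, X₁ᶜ.piecewise x y ∈ R := fun x hx y hy => by
    rw [piecewise_compl]; exact hmix₁ y hy x hx
  have hcard₂ : #X₁ᶜ = n - #X₁ := by rw [card_compl, Fintype.card_fin]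
  have hrank₁ := hgood X₁ hbal₁
  have hrank₂ := hgood X₁ᶜ (by omega)
  have hwidth (S : Finset (Fin n)) : (H.submatrix id ((↑) : S → Fin n)).rank ≤ #S := by
    simpa using rank_le_card_width (H.submatrix id ((↑) : S → Fin n))
  have := hrank₁.trans (hwidth X₁)
  have := hrank₂.trans (hwidth X₁ᶜ)
  calc #R ≤ #(R.image X₁.restrict) * #(R.image X₁ᶜ.restrict) :=
        card_le_card_image_restrict_mul R X₁
    _ ≤ 2 ^ (#X₁ - s) * 2 ^ (#X₁ᶜ - s) := by
        simpa using Nat.mul_le_mul (card_image_restrict_le_pow H X₁ hcode hmix₁ hrank₁)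
          (card_image_restrict_le_pow H X₁ᶜ hcode hmix₂ hrank₂)
    _ = 2 ^ (n - 2 * s) := by rw [← pow_add]; congr 1; omega
end

section
/- With m = n/100, a uniformly random matrix H ∈ F_2^{m×n} is (m−1)-good with probability at least 1 − 2^{2m}·e^{−n/72}; in particular, (m−1)-good matrices exist for all sufficiently large n. -/
/-- `H` is `s`-good: every submatrix formed by at least `n/3` of its columns
has rank at least `s`. -/
def IsGood (m n s : ℕ) (H : Matrix (Fin m) (Fin n) (ZMod 2)) : Prop :=
  ∀ S : Finset (Fin n), 3 * S.card ≥ n →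
    (H.submatrix id (Subtype.val : {j // j ∈ S} → Fin n)).rank ≥ s

/-!
If `H` is not `(m - 1)`-good, some `n/3` of its columns span a space of dimension at most
`m - 2`, so the rows of some rank-2 matrix `M` annihilate all of them. For a fixed `M`, each
column of a uniformly random `H` lies in `ker M` independently with probability
`|F|⁻² ≤ 1/4`, so by a Chernoff bound at most a fraction `e^{-n/72}` of all `H` have `n/3`
columns in `ker M`. A union bound over the at most `|F|^{2m}` matrices `M` concludes, and
`2^{2m} e^{-n/72} < 1` for `m = ⌊n/100⌋` because `log 2 / 50 < 1/72`.
-/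

open Finset Matrix

theorem Matrix.card_pow_rank_mul_card_ker {F ι κ : Type*} [Field F] [Fintype F] [DecidableEq F]
    [Fintype ι] [DecidableEq ι] [Fintype κ] (M : Matrix κ ι F) :
    Fintype.card F ^ M.rank * #{v | M *ᵥ v = 0} = Fintype.card F ^ Fintype.card ι := by
  have hker : #{v | M *ᵥ v = 0} = Nat.card (LinearMap.ker M.mulVecLin) := by
    rw [← Fintype.card_subtype, ← Nat.card_eq_fintype_card]; rfl
  have rank_nullity := LinearMap.finrank_range_add_finrank_ker M.mulVecLin
  rw [Module.finrank_fintype_fun_eq_card] at rank_nullity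
  rw [hker, Module.natCard_eq_pow_finrank (K := F), Nat.card_eq_fintype_card, ← pow_add,
    Matrix.rank, rank_nullity]

theorem Matrix.exists_rank_eq_mul_eq_zero {F ι : Type*} [Field F] [Fintype ι] {m k : ℕ}
    (A : Matrix (Fin m) ι F) (h : A.rank + k ≤ m) :
    ∃ M : Matrix (Fin k) (Fin m) F, M.rank = k ∧ M * A = 0 := by
  have hk : k ≤ Module.finrank F (LinearMap.ker Aᵀ.mulVecLin) := by
    have rank_nullity := LinearMap.finrank_range_add_finrank_ker Aᵀ.mulVecLin
    rw [Module.finrank_fin_fun, ← Matrix.rank, rank_transpose] at rank_nullity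
    omega
  set b := Module.finBasis F (LinearMap.ker Aᵀ.mulVecLin)
  set v : Fin k → Fin m → F := (LinearMap.ker Aᵀ.mulVecLin).subtype ∘ b ∘ Fin.castLE hk
  have hv : LinearIndependent F v :=
    (b.linearIndependent.comp _ (Fin.castLE_injective hk)).map' _ (Submodule.ker_subtype _)
  refine ⟨Matrix.of v, hv.rank_matrix.trans (Fintype.card_fin k), ?_⟩
  ext i j
  have hvA : Aᵀ *ᵥ v i = 0 := (b (Fin.castLE hk i)).2
  rw [mulVec_transpose] at hvA
  exact congrFun hvA j

theorem Fintype.card_matrix_fin (F : Type*) [Fintype F] (m n : ℕ) :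
    Fintype.card (Matrix (Fin m) (Fin n) F) = Fintype.card F ^ (m * n) := by
  rw [Fintype.card_congr Matrix.of.symm, Fintype.card_fun, Fintype.card_fun, Fintype.card_fin,
    Fintype.card_fin, ← pow_mul, mul_comm]

theorem chernoff_card_le {V : Type*} [Fintype V] {P : V → Prop} [DecidablePred P]
    (hP : 4 * #{v | P v} ≤ Fintype.card V) (n : ℕ) :
    (#{g : Fin n → V | n ≤ 3 * #{c | P (g c)}} : ℝ) ≤
      Real.exp (-n / 72) * Fintype.card V ^ n := by
  -- Exponential moment with weight `(11/10)^3` on `P`; the constant per coordinate is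
  -- `(10/11) * (1 + ((11/10)^3 - 1) / 4) = 4331/4400 ≤ 1 - 1/72 ≤ e^{-1/72}`.
  let w : V → ℝ := fun v => if P v then (11 / 10) ^ 3 else 1
  have hw_nonneg : ∀ v, 0 ≤ w v := fun v => by unfold w; split_ifs <;> norm_num
  set often : Finset (Fin n → V) := {g | n ≤ 3 * #{c | P (g c)}}
  have hweight : ∀ g ∈ often, (11 / 10 : ℝ) ^ n ≤ ∏ c, w (g c) := fun g hg => by
    rw [prod_ite, prod_const, prod_const, one_pow, mul_one, ← pow_mul]
    exact pow_le_pow_right₀ (by norm_num) (mem_filter.1 hg).2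
  have hsum : ∑ v, w v ≤ 4331 / 4000 * Fintype.card V := by
    have hcard := card_filter_add_card_filter_not (s := univ) (fun v => P v)
    have hP' : (4 * #{v | P v} : ℝ) ≤ Fintype.card V := by exact_mod_cast hP
    simp only [w, sum_ite, sum_const, nsmul_eq_mul, mul_one]
    rw [card_univ] at hcard
    rw [← hcard] at hP' ⊢
    push_cast at hP' ⊢
    linarith
  have hexp : (4331 / 4400 : ℝ) ≤ Real.exp (-1 / 72) := by
    linarith [Real.add_one_le_exp (-1 / 72 : ℝ)]
  calc (#often : ℝ) = (10 / 11) ^ n * ∑ g ∈ often, (11 / 10 : ℝ) ^ n := by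
        rw [sum_const, nsmul_eq_mul, mul_left_comm, ← mul_pow]; norm_num
    _ ≤ (10 / 11) ^ n * ∑ g : Fin n → V, ∏ c, w (g c) := by
        gcongr
        exact (sum_le_sum hweight).trans (sum_le_sum_of_subset_of_nonneg (subset_univ _)
          fun g _ _ => prod_nonneg fun c _ => hw_nonneg _)
    _ = (10 / 11) ^ n * (∑ v, w v) ^ n := by rw [Fintype.sum_pow]
    _ ≤ (10 / 11) ^ n * (4331 / 4000 * Fintype.card V) ^ n := by gcongr
    _ = (4331 / 4400) ^ n * Fintype.card V ^ n := by
        rw [← mul_pow, ← mul_assoc, mul_pow]; norm_num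
    _ ≤ Real.exp (-1 / 72) ^ n * Fintype.card V ^ n := by gcongr
    _ = Real.exp (-n / 72) * Fintype.card V ^ n := by rw [← Real.exp_nat_mul]; ring_nf

theorem card_exists_rank_two_annihilating_le {F : Type*} [Field F] [Fintype F] [DecidableEq F]
    (m n : ℕ) :
    (#{H : Matrix (Fin m) (Fin n) F |
        ∃ M : Matrix (Fin 2) (Fin m) F, M.rank = 2 ∧
          n ≤ 3 * #{c | M *ᵥ Hᵀ c = 0}} : ℝ) ≤
      Fintype.card F ^ (2 * m) * Real.exp (-n / 72) * Fintype.card F ^ (m * n) := by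
  set q := Fintype.card F
  set rankTwo : Finset (Matrix (Fin 2) (Fin m) F) := {M | M.rank = 2}
  set bad : Matrix (Fin 2) (Fin m) F → Finset (Matrix (Fin m) (Fin n) F) :=
    fun M => {H | n ≤ 3 * #{c | M *ᵥ Hᵀ c = 0}}
  have hbad : ∀ M ∈ rankTwo, (#(bad M) : ℝ) ≤ Real.exp (-n / 72) * q ^ (m * n) := by
    intro M hM
    have hker : 4 * #{v | M *ᵥ v = 0} ≤ Fintype.card (Fin m → F) := by
      have hq : 2 ≤ q := Fintype.one_lt_card
      have hcard := M.card_pow_rank_mul_card_ker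
      rw [(mem_filter.1 hM).2, Fintype.card_fin] at hcard
      rw [Fintype.card_fun, Fintype.card_fin, ← hcard]
      gcongr
      nlinarith
    have htranspose : #(bad M) = #{g : Fin n → Fin m → F | n ≤ 3 * #{c | M *ᵥ g c = 0}} :=
      card_equiv (transposeAddEquiv (Fin m) (Fin n) F).toEquiv fun _ => by
        simp only [bad, mem_filter, mem_univ, true_and]; rfl
    have hchernoff := chernoff_card_le hker n
    rw [Fintype.card_fun, Fintype.card_fin, Nat.cast_pow, ← pow_mul] at hchernoff
    rwa [htranspose]
  have hcover : ({H | ∃ M : Matrix (Fin 2) (Fin m) F, M.rank = 2 ∧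
      n ≤ 3 * #{c | M *ᵥ Hᵀ c = 0}} : Finset _) ⊆ rankTwo.biUnion bad := by
    intro H hH
    obtain ⟨M, hM, hMH⟩ := (mem_filter.1 hH).2
    exact mem_biUnion.2
      ⟨M, mem_filter.2 ⟨mem_univ M, hM⟩, mem_filter.2 ⟨mem_univ H, hMH⟩⟩
  have hcount : (#rankTwo : ℝ) ≤ q ^ (2 * m) := by
    have hle := card_filter_le (univ : Finset (Matrix (Fin 2) (Fin m) F)) fun M => M.rank = 2
    rw [card_univ, Fintype.card_matrix_fin] at hle
    exact_mod_cast hle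
  calc _ ≤ (#(rankTwo.biUnion bad) : ℝ) := by exact_mod_cast card_le_card hcover
    _ ≤ ∑ M ∈ rankTwo, (#(bad M) : ℝ) := by exact_mod_cast card_biUnion_le
    _ ≤ ∑ M ∈ rankTwo, Real.exp (-n / 72) * q ^ (m * n) := sum_le_sum hbad
    _ ≤ _ := by
        rw [sum_const, nsmul_eq_mul, ← mul_assoc]
        gcongr

theorem exists_rank_two_of_not_isGood {m n : ℕ} {H : Matrix (Fin m) (Fin n) (ZMod 2)}
    (h : ¬IsGood m n (m - 1) H) :
    ∃ M : Matrix (Fin 2) (Fin m) (ZMod 2), M.rank = 2 ∧ n ≤ 3 * #{c | M *ᵥ Hᵀ c = 0} := by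
  simp only [IsGood, not_forall, not_le] at h
  obtain ⟨S, hS, hrank⟩ := h
  obtain ⟨M, hM, hMA⟩ :=
    (H.submatrix id Subtype.val).exists_rank_eq_mul_eq_zero (k := 2) (by omega)
  refine ⟨M, hM, hS.trans (Nat.mul_le_mul_left 3 (card_le_card fun c hc => ?_))⟩
  exact mem_filter.2 ⟨mem_univ c, funext fun i => congrFun (congrFun hMA i) ⟨c, hc⟩⟩

theorem le_card_isGood (m n : ℕ) :
    (1 - 2 ^ (2 * m) * Real.exp (-n / 72)) * 2 ^ (m * n) ≤
      (Nat.card {H : Matrix (Fin m) (Fin n) (ZMod 2) // IsGood m n (m - 1) H} : ℝ) := by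
  classical
  set good : Finset (Matrix (Fin m) (Fin n) (ZMod 2)) := {H | IsGood m n (m - 1) H}
  set notGood : Finset (Matrix (Fin m) (Fin n) (ZMod 2)) := {H | ¬IsGood m n (m - 1) H}
  have hsplit : (#good : ℝ) + #notGood = 2 ^ (m * n) := by
    have hcard := card_filter_add_card_filter_not (s := univ) fun H => IsGood m n (m - 1) H
    rw [card_univ, Fintype.card_matrix_fin, ZMod.card] at hcard
    exact_mod_cast hcard
  have hnotGood : (#notGood : ℝ) ≤ 2 ^ (2 * m) * Real.exp (-n / 72) * 2 ^ (m * n) := by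
    have hunion := card_exists_rank_two_annihilating_le (F := ZMod 2) m n
    rw [ZMod.card] at hunion
    refine le_trans ?_ (by exact_mod_cast hunion)
    exact_mod_cast card_le_card fun H hH =>
      mem_filter.2 ⟨mem_univ H, exists_rank_two_of_not_isGood (mem_filter.1 hH).2⟩
  rw [Nat.card_eq_fintype_card, Fintype.card_subtype]
  linarith

theorem two_pow_two_mul_div_mul_exp_lt_one {n : ℕ} (hn : 0 < n) :
    2 ^ (2 * (n / 100)) * Real.exp (-n / 72) < 1 := by
  have hdiv : ((n / 100 : ℕ) : ℝ) ≤ n / 100 := Nat.cast_div_le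
  have hn' : (0 : ℝ) < n := by exact_mod_cast hn
  rw [← Real.rpow_natCast, Real.rpow_def_of_pos two_pos, ← Real.exp_add, Real.exp_lt_one_iff]
  push_cast
  nlinarith [Real.log_two_lt_d9, Real.log_pos one_lt_two]

/-- With `m = n/100`, a uniformly random matrix `H ∈ F₂^{m×n}` is `(m−1)`-good
with probability at least `1 − 2^{2m}·e^{−n/72}`; in particular `(m−1)`-good
matrices exist for all sufficiently large `n`. -/
theorem good_matrices_exist :
    (∀ n : ℕ,
      ((Nat.card {H : Matrix (Fin (n / 100)) (Fin n) (ZMod 2) //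
          IsGood (n / 100) n (n / 100 - 1) H} : ℝ)
        ≥ (1 - 2 ^ (2 * (n / 100)) * Real.exp (-(n : ℝ) / 72)) * 2 ^ ((n / 100) * n))) ∧
    (∃ N : ℕ, ∀ n ≥ N, ∃ H : Matrix (Fin (n / 100)) (Fin n) (ZMod 2),
      IsGood (n / 100) n (n / 100 - 1) H) := by
  refine ⟨fun n => le_card_isGood (n / 100) n, 1, fun n hn => ?_⟩
  have hpos : (0 : ℝ) < (1 - 2 ^ (2 * (n / 100)) * Real.exp (-n / 72)) * 2 ^ ((n / 100) * n) :=
    mul_pos (sub_pos.2 (two_pow_two_mul_div_mul_exp_lt_one hn)) (by positivity)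
  obtain ⟨⟨H, hH⟩⟩ :=
    (Nat.card_pos_iff.1 (by exact_mod_cast hpos.trans_le (le_card_isGood _ _))).1
  exact ⟨H, hH⟩
end

section
/- Let H ∈ F_2^{m×n} be a matrix such that every submatrix formed by at least n/3 columns has rank at least s. Let f(x) = 1 iff Hx = 0. If f = ⋁_{k=1}^K r_k with pairwise disjoint balanced rectangles r_k, then K ≥ 2^{n − rank(H)} / 2^{n − 2s} = 2^{2s − rank(H)}. -/
open Module

lemma ker_card_aux (m : ℕ) (ι : Type) [Fintype ι] [DecidableEq ι]
    (A : Matrix (Fin m) ι (ZMod 2)) :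
    Nat.card {v : ι → ZMod 2 // A.mulVec v = 0} = 2 ^ (Fintype.card ι - A.rank) := by
  haveI : Fintype (LinearMap.ker A.mulVecLin) := Fintype.ofFinite _
  have hker : Nat.card {v : ι → ZMod 2 // A.mulVec v = 0}
      = Fintype.card (LinearMap.ker A.mulVecLin) := by
    rw [← Nat.card_eq_fintype_card]
    apply Nat.card_congr
    exact Equiv.subtypeEquivRight (fun v => by
      simp [LinearMap.mem_ker, Matrix.mulVecLin_apply])
  have hrn : A.rank + finrank (ZMod 2) (LinearMap.ker A.mulVecLin)
      = Fintype.card ι := by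
    rw [Matrix.rank]
    rw [LinearMap.finrank_range_add_finrank_ker A.mulVecLin, finrank_pi]
  have hc : Fintype.card (LinearMap.ker A.mulVecLin)
      = 2 ^ finrank (ZMod 2) (LinearMap.ker A.mulVecLin) := by
    have := card_eq_pow_finrank (K := ZMod 2) (V := LinearMap.ker A.mulVecLin)
    simpa using this
  rw [hker, hc]
  congr 1
  omega

lemma mulVec_support (m n : ℕ) (H : Matrix (Fin m) (Fin n) (ZMod 2))
    (S : Finset (Fin n)) (w : Fin n → ZMod 2) (hw : ∀ j ∉ S, w j = 0) :
    (H.submatrix id (Subtype.val : {j // j ∈ S} → Fin n)).mulVec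
      (fun j => w j.val) = H.mulVec w := by
  funext i
  simp only [Matrix.mulVec, dotProduct, Matrix.submatrix_apply, id]
  rw [← Finset.sum_subtype S (fun j => Iff.rfl) (fun j => H i j * w j)]
  apply Finset.sum_subset S.subset_univ
  intro j _ hj
  rw [hw j hj, mul_zero]

lemma rect_bound (m n s : ℕ) (H : Matrix (Fin m) (Fin n) (ZMod 2))
    (S : Finset (Fin n)) (ρ₁ ρ₂ : (Fin n → ZMod 2) → Bool)
    (h1 : s ≤ (H.submatrix id (Subtype.val : {j // j ∈ S} → Fin n)).rank)
    (h2 : s ≤ (H.submatrix id (Subtype.val : {j // j ∈ Sᶜ} → Fin n)).rank)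
    (hd1 : ∀ x y, (∀ i ∈ S, x i = y i) → ρ₁ x = ρ₁ y)
    (hd2 : ∀ x y, (∀ i ∉ S, x i = y i) → ρ₂ x = ρ₂ y)
    (hsub : ∀ x, ρ₁ x = true → ρ₂ x = true → H.mulVec x = 0) :
    (Finset.univ.filter (fun x : Fin n → ZMod 2 => ρ₁ x = true ∧ ρ₂ x = true)).card
      ≤ 2 ^ (n - 2 * s) ∧ 2 * s ≤ n := by
  set A1 := H.submatrix id (Subtype.val : {j // j ∈ S} → Fin n) with hA1
  set A2 := H.submatrix id (Subtype.val : {j // j ∈ Sᶜ} → Fin n) with hA2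
  have hc1 : Fintype.card {j // j ∈ S} = S.card := Fintype.card_coe S
  have hc2 : Fintype.card {j // j ∈ Sᶜ} = n - S.card := by
    rw [Fintype.card_coe, Finset.card_compl, Fintype.card_fin]
  have hr1 : A1.rank ≤ S.card := by
    simpa [hc1] using A1.rank_le_card_width
  have hr2 : A2.rank ≤ n - S.card := by
    simpa [hc2] using A2.rank_le_card_width
  have hSn : S.card ≤ n := by simpa using S.card_le_univ
  have hsn : 2 * s ≤ n := by omega
  refine ⟨?_, hsn⟩
  set R := Finset.univ.filter (fun x : Fin n → ZMod 2 => ρ₁ x = true ∧ ρ₂ x = true) with hR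
  rcases R.eq_empty_or_nonempty with he | ⟨x₀, hx₀⟩
  · simp [he]
  rw [hR, Finset.mem_filter] at hx₀
  obtain ⟨-, hx₀1, hx₀2⟩ := hx₀
  have hx₀0 : H.mulVec x₀ = 0 := hsub x₀ hx₀1 hx₀2
  -- the injection
  have key : ∀ x ∈ R,
      A1.mulVec (fun j : {j // j ∈ S} => x j.val - x₀ j.val) = 0 ∧
      A2.mulVec (fun j : {j // j ∈ Sᶜ} => x j.val - x₀ j.val) = 0 := by
    intro x hx
    rw [hR, Finset.mem_filter] at hx
    obtain ⟨-, hx1, hx2⟩ := hx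
    constructor
    · set y : Fin n → ZMod 2 := fun i => if i ∈ S then x i else x₀ i with hy
      have hy0 : H.mulVec y = 0 := by
        apply hsub
        · rw [hd1 y x (fun i hi => by simp [hy, hi])]; exact hx1
        · rw [hd2 y x₀ (fun i hi => by simp [hy, hi])]; exact hx₀2
      have hw : ∀ j ∉ S, (y - x₀) j = 0 := by
        intro j hj; simp [hy, hj]
      have := mulVec_support m n H S (y - x₀) hw
      rw [Matrix.mulVec_sub, hy0, hx₀0, sub_zero] at this
      rw [← hA1] at this
      convert this using 2
      funext j
      simp [hy, j.2]
    · set y : Fin n → ZMod 2 := fun i => if i ∈ S then x₀ i else x i with hy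
      have hy0 : H.mulVec y = 0 := by
        apply hsub
        · rw [hd1 y x₀ (fun i hi => by simp [hy, hi])]; exact hx₀1
        · rw [hd2 y x (fun i hi => by simp [hy, hi])]; exact hx2
      have hw : ∀ j ∉ Sᶜ, (y - x₀) j = 0 := by
        intro j hj; rw [Finset.mem_compl, not_not] at hj; simp [hy, hj]
      have := mulVec_support m n H Sᶜ (y - x₀) hw
      rw [Matrix.mulVec_sub, hy0, hx₀0, sub_zero] at this
      rw [← hA2] at this
      convert this using 2
      funext j
      have hj : j.val ∉ S := Finset.mem_compl.mp j.2
      simp [hy, hj]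
  -- count
  haveI : Fintype {v : {j // j ∈ S} → ZMod 2 // A1.mulVec v = 0} := Fintype.ofFinite _
  haveI : Fintype {v : {j // j ∈ Sᶜ} → ZMod 2 // A2.mulVec v = 0} := Fintype.ofFinite _
  have hinj : ∃ f : {x // x ∈ R} →
      ({v : {j // j ∈ S} → ZMod 2 // A1.mulVec v = 0} ×
       {v : {j // j ∈ Sᶜ} → ZMod 2 // A2.mulVec v = 0}), Function.Injective f := by
    refine ⟨fun x => ⟨⟨fun j => x.val j.val - x₀ j.val, (key x.val x.2).1⟩,
      ⟨fun j => x.val j.val - x₀ j.val, (key x.val x.2).2⟩⟩, ?_⟩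
    intro x y hxy
    apply Subtype.ext
    funext j
    by_cases hj : j ∈ S
    · have := congrFun (congrArg (fun p => (p.1 : {j // j ∈ S} → ZMod 2)) hxy) ⟨j, hj⟩
      simpa [sub_left_inj] using this
    · have := congrFun (congrArg (fun p => (p.2 : {j // j ∈ Sᶜ} → ZMod 2)) hxy)
        ⟨j, Finset.mem_compl.mpr hj⟩
      simpa [sub_left_inj] using this
  obtain ⟨f, hf⟩ := hinj
  have hcard : R.card ≤
      Fintype.card ({v : {j // j ∈ S} → ZMod 2 // A1.mulVec v = 0} ×
       {v : {j // j ∈ Sᶜ} → ZMod 2 // A2.mulVec v = 0}) := by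
    rw [← Fintype.card_coe R]
    exact Fintype.card_le_of_injective f hf
  rw [Fintype.card_prod, ← Nat.card_eq_fintype_card, ← Nat.card_eq_fintype_card,
    ker_card_aux m _ A1, ker_card_aux m _ A2, hc1, hc2, ← pow_add] at hcard
  refine hcard.trans (Nat.pow_le_pow_right (by norm_num) ?_)
  omega


/-- If every submatrix of `H` with at least `n/3` columns has rank at least `s`,
`rank H ≤ m`, and the characteristic function of the code of `H` is covered by
`K` pairwise disjoint balanced rectangles, then `K ≥ 2^(2s − rank H)`. -/
theorem code_disjoint_cover_lower_bound (m n s K : ℕ)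
    (H : Matrix (Fin m) (Fin n) (ZMod 2))
    (hgood : ∀ S : Finset (Fin n), 3 * S.card ≥ n →
      (H.submatrix id (Subtype.val : {j // j ∈ S} → Fin n)).rank ≥ s)
    (hrank : H.rank ≤ m)
    (X₁ : Fin K → Finset (Fin n)) (ρ₁ ρ₂ : Fin K → (Fin n → ZMod 2) → Bool)
    (hbal : ∀ k, n ≤ 3 * (X₁ k).card ∧ 3 * (X₁ k).card ≤ 2 * n)
    (hdep₁ : ∀ k x y, (∀ i ∈ X₁ k, x i = y i) → ρ₁ k x = ρ₁ k y)
    (hdep₂ : ∀ k x y, (∀ i ∉ X₁ k, x i = y i) → ρ₂ k x = ρ₂ k y)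
    (hcover : ∀ x, H.mulVec x = 0 ↔ ∃ k, ρ₁ k x = true ∧ ρ₂ k x = true)
    (hdisj : ∀ i j, i ≠ j → ∀ x,
      ¬((ρ₁ i x = true ∧ ρ₂ i x = true) ∧ (ρ₁ j x = true ∧ ρ₂ j x = true))) :
    (K : ℝ) ≥ (2 : ℝ) ^ (((2 * s : ℕ) : ℝ) - (H.rank : ℝ)) := by
  classical
  have h0 : H.mulVec 0 = 0 := Matrix.mulVec_zero H
  obtain ⟨k0, -, -⟩ := (hcover 0).mp h0
  set Rk : Fin K → Finset (Fin n → ZMod 2) :=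
    fun k => Finset.univ.filter (fun x => ρ₁ k x = true ∧ ρ₂ k x = true) with hRk
  have hrect : ∀ k, (Rk k).card ≤ 2 ^ (n - 2 * s) ∧ 2 * s ≤ n := by
    intro k
    apply rect_bound m n s H (X₁ k) (ρ₁ k) (ρ₂ k)
    · exact hgood (X₁ k) (by have := (hbal k).1; omega)
    · apply hgood
      rw [Finset.card_compl, Fintype.card_fin]
      have h2 := (hbal k).2
      have h3 : (X₁ k).card ≤ n := by simpa using (X₁ k).card_le_univ
      omega
    · exact hdep₁ k
    · exact hdep₂ k
    · intro x h1 h2; exact (hcover x).mpr ⟨k, h1, h2⟩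
  have hsn := (hrect k0).2
  set kerF := Finset.univ.filter (fun x : Fin n → ZMod 2 => H.mulVec x = 0) with hkF
  have hkcard : kerF.card = 2 ^ (n - H.rank) := by
    rw [hkF, ← Fintype.card_subtype, ← Nat.card_eq_fintype_card,
      ker_card_aux m (Fin n) H, Fintype.card_fin]
  have hsubset : kerF ⊆ Finset.univ.biUnion Rk := by
    intro x hx
    rw [hkF, Finset.mem_filter] at hx
    obtain ⟨k, hk⟩ := (hcover x).mp hx.2
    exact Finset.mem_biUnion.mpr ⟨k, Finset.mem_univ k, by simp [hRk, hk.1, hk.2]⟩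
  have hmain : 2 ^ (n - H.rank) ≤ K * 2 ^ (n - 2 * s) := by
    calc 2 ^ (n - H.rank) = kerF.card := hkcard.symm
    _ ≤ (Finset.univ.biUnion Rk).card := Finset.card_le_card hsubset
    _ ≤ ∑ k, (Rk k).card := Finset.card_biUnion_le
    _ ≤ ∑ _k : Fin K, 2 ^ (n - 2*s) := Finset.sum_le_sum (fun k _ => (hrect k).1)
    _ = K * 2 ^ (n - 2*s) := by simp [mul_comm]
  have hrn : H.rank ≤ n := H.rank_le_width
  have hnat : 2 ^ (2 * s) ≤ K * 2 ^ H.rank := by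
    have hpos : 0 < 2 ^ (n - 2*s) := Nat.pow_pos (by norm_num)
    apply Nat.le_of_mul_le_mul_right _ hpos
    calc 2 ^ (2*s) * 2 ^ (n - 2*s) = 2 ^ (n - H.rank) * 2 ^ H.rank := by
          rw [← pow_add, ← pow_add]; congr 1; omega
    _ ≤ (K * 2 ^ (n - 2*s)) * 2 ^ H.rank := Nat.mul_le_mul_right _ hmain
    _ = K * 2 ^ H.rank * 2 ^ (n - 2*s) := by ring
  have hKr : (2:ℝ) ^ (2*s : ℕ) ≤ (K:ℝ) * 2 ^ H.rank := by exact_mod_cast hnat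
  rw [ge_iff_le, Real.rpow_sub (by norm_num), Real.rpow_natCast, Real.rpow_natCast,
    div_le_iff₀ (by positivity)]
  exact hKr
end

section
/- Let f be the characteristic function of a linear code with check matrix H, written over variable partition (X₁, X₂) with corresponding column submatrices H₁, H₂. Let r = ρ₁ ∧ ρ₂ be a rectangle with this partition, let A ⊆ ρ₁⁻¹(1), B ⊆ ρ₂⁻¹(1) be a maximal pair with A × B ⊆ f⁻¹(1) (a core of r), and set Ā = ρ₁⁻¹(1) \ A, B̄ = ρ₂⁻¹(1) \ B. Then, provided A and B are nonempty, every assignment in (Ā × B) ∪ (A × B̄) is a model of r but not a model of f. -/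
/-- For the characteristic function `f(a,b) = [H₁a + H₂b = 0]` of a linear code
split along a variable partition, if `(A, B)` is a maximal (nonempty) core of the
rectangle with model sets `P × Q`, then every assignment in `(P\A) × B` and in
`A × (Q\B)` is a model of the rectangle but a false positive on `f`. -/
theorem core_complement_false_positives (m : ℕ) {X₁ X₂ : Type*}
    [Fintype X₁] [Fintype X₂] [DecidableEq X₁] [DecidableEq X₂]
    (H₁ : Matrix (Fin m) X₁ (ZMod 2)) (H₂ : Matrix (Fin m) X₂ (ZMod 2))
    (P : Finset (X₁ → ZMod 2)) (Q : Finset (X₂ → ZMod 2))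
    (A : Finset (X₁ → ZMod 2)) (B : Finset (X₂ → ZMod 2))
    (hA : A ⊆ P) (hB : B ⊆ Q) (hAne : A.Nonempty) (hBne : B.Nonempty)
    (hmodels : ∀ a ∈ A, ∀ b ∈ B, H₁.mulVec a + H₂.mulVec b = 0)
    (hmax : ∀ A' ⊆ P, ∀ B' ⊆ Q,
      (∀ a ∈ A', ∀ b ∈ B', H₁.mulVec a + H₂.mulVec b = 0) →
      A'.card * B'.card ≤ A.card * B.card) :
    (∀ a ∈ P \ A, ∀ b ∈ B, a ∈ P ∧ b ∈ Q ∧ H₁.mulVec a + H₂.mulVec b ≠ 0) ∧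
    (∀ a ∈ A, ∀ b ∈ Q \ B, a ∈ P ∧ b ∈ Q ∧ H₁.mulVec a + H₂.mulVec b ≠ 0) := by
  obtain ⟨a₀, ha₀⟩ := hAne
  obtain ⟨b₀, hb₀⟩ := hBne
  constructor
  · intro a ha b hb
    rw [Finset.mem_sdiff] at ha
    refine ⟨ha.1, hB hb, ?_⟩
    intro h0
    have hins : ∀ a' ∈ insert a A, ∀ b' ∈ B, H₁.mulVec a' + H₂.mulVec b' = 0 := by
      intro a' ha' b' hb'
      rcases Finset.mem_insert.mp ha' with rfl | ha'
      · have ha_eq : H₁.mulVec a' = H₁.mulVec a₀ := by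
          rw [eq_neg_of_add_eq_zero_left h0,
            eq_neg_of_add_eq_zero_left (hmodels a₀ ha₀ b hb)]
        rw [ha_eq]; exact hmodels a₀ ha₀ b' hb'
      · exact hmodels a' ha' b' hb'
    have hsub : insert a A ⊆ P := Finset.insert_subset ha.1 hA
    have hle := hmax _ hsub B hB hins
    rw [Finset.card_insert_of_notMem ha.2, add_mul, one_mul] at hle
    have hBpos : 0 < B.card := Finset.card_pos.mpr ⟨b, hb⟩
    omega
  · intro a ha b hb
    rw [Finset.mem_sdiff] at hb
    refine ⟨hA ha, hb.1, ?_⟩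
    intro h0
    have hins : ∀ a' ∈ A, ∀ b' ∈ insert b B, H₁.mulVec a' + H₂.mulVec b' = 0 := by
      intro a' ha' b' hb'
      rcases Finset.mem_insert.mp hb' with rfl | hb'
      · have ha_eq : H₁.mulVec a' = H₁.mulVec a := by
          rw [eq_neg_of_add_eq_zero_left (hmodels a' ha' b₀ hb₀),
            eq_neg_of_add_eq_zero_left (hmodels a ha b₀ hb₀)]
        rw [ha_eq]; exact h0
      · exact hmodels a' ha' b' hb'
    have hsub : insert b B ⊆ Q := Finset.insert_subset hb.1 hB
    have hle := hmax A hA _ hsub hins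
    rw [Finset.card_insert_of_notMem hb.2, mul_add, mul_one] at hle
    have hApos : 0 < A.card := Finset.card_pos.mpr ⟨a, ha⟩
    omega
end

section
/- Let f be the characteristic function of a linear code of length n, let r be a rectangle with |r⁻¹(1) ∩ f⁻¹(1)| ≥ |r⁻¹(1) ∩ f⁻¹(0)|, and let r_core be a core rectangle of r with respect to f. Then Disc(f, r) ≤ |r_core⁻¹(1)| / 2^n. -/
open Finset

lemma zmod2_add_self {m : ℕ} (u : Fin m → ZMod 2) : u + u = 0 := by
  funext i
  have : ∀ p : ZMod 2, p + p = 0 := by decide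
  exact this (u i)

lemma zmod2_add_eq_zero {m : ℕ} (u v : Fin m → ZMod 2) : u + v = 0 ↔ u = v := by
  constructor
  · intro h
    funext i
    have h' := congrFun h i
    have : ∀ p q : ZMod 2, p + q = 0 → p = q := by decide
    exact this _ _ h'
  · rintro rfl; exact zmod2_add_self u

def pr1 {n : ℕ} (X₁ : Finset (Fin n)) (x : Fin n → ZMod 2) : Fin n → ZMod 2 :=
  fun i => if i ∈ X₁ then x i else 0

def pr2 {n : ℕ} (X₁ : Finset (Fin n)) (x : Fin n → ZMod 2) : Fin n → ZMod 2 :=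
  fun i => if i ∈ X₁ then 0 else x i

lemma pr1_add_pr2 {n : ℕ} (X₁ : Finset (Fin n)) (x : Fin n → ZMod 2) :
    pr1 X₁ x + pr2 X₁ x = x := by
  funext i; simp only [Pi.add_apply, pr1, pr2]; split <;> simp

lemma pr1_add {n : ℕ} (X₁ : Finset (Fin n)) (x y : Fin n → ZMod 2) :
    pr1 X₁ (x + y) = pr1 X₁ x + pr1 X₁ y := by
  funext i; simp only [Pi.add_apply, pr1]; split <;> simp

lemma pr2_add {n : ℕ} (X₁ : Finset (Fin n)) (x y : Fin n → ZMod 2) :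
    pr2 X₁ (x + y) = pr2 X₁ x + pr2 X₁ y := by
  funext i; simp only [Pi.add_apply, pr2]; split <;> simp

lemma pr1_pr1 {n : ℕ} (X₁ : Finset (Fin n)) (x : Fin n → ZMod 2) :
    pr1 X₁ (pr1 X₁ x) = pr1 X₁ x := by
  funext i; simp only [pr1]; split <;> simp_all

lemma pr2_pr1 {n : ℕ} (X₁ : Finset (Fin n)) (x : Fin n → ZMod 2) :
    pr2 X₁ (pr1 X₁ x) = 0 := by
  funext i; simp only [pr2, pr1]; split <;> simp_all

lemma pr1_pr2 {n : ℕ} (X₁ : Finset (Fin n)) (x : Fin n → ZMod 2) :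
    pr1 X₁ (pr2 X₁ x) = 0 := by
  funext i; simp only [pr2, pr1]; split <;> simp_all

lemma pr2_pr2 {n : ℕ} (X₁ : Finset (Fin n)) (x : Fin n → ZMod 2) :
    pr2 X₁ (pr2 X₁ x) = pr2 X₁ x := by
  funext i; simp only [pr2]; split <;> simp_all

lemma pr1_eq_of_agree {n : ℕ} (X₁ : Finset (Fin n)) {x y : Fin n → ZMod 2}
    (h : ∀ i ∈ X₁, x i = y i) : pr1 X₁ x = pr1 X₁ y := by
  funext i; simp only [pr1]; split
  · exact h i (by assumption)
  · rfl

lemma pr2_eq_of_agree {n : ℕ} (X₁ : Finset (Fin n)) {x y : Fin n → ZMod 2}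
    (h : ∀ i ∉ X₁, x i = y i) : pr2 X₁ x = pr2 X₁ y := by
  funext i; simp only [pr2]; split
  · rfl
  · exact h i (by assumption)

lemma agree_of_pr1_eq {n : ℕ} (X₁ : Finset (Fin n)) {x y : Fin n → ZMod 2}
    (h : pr1 X₁ x = pr1 X₁ y) : ∀ i ∈ X₁, x i = y i := by
  intro i hi
  have := congrFun h i
  simpa [pr1, hi] using this

lemma agree_of_pr2_eq {n : ℕ} (X₁ : Finset (Fin n)) {x y : Fin n → ZMod 2}
    (h : pr2 X₁ x = pr2 X₁ y) : ∀ i ∉ X₁, x i = y i := by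
  intro i hi
  have := congrFun h i
  simpa [pr2, hi] using this

lemma two_mul_sum_le {ι : Type*} [Fintype ι] (a b : ι → ℕ) (C : ℕ)
    (h : ∀ v, a v * b v ≤ C) :
    2 * ∑ v, a v * b v ≤ C + (∑ v, a v) * (∑ v, b v) := by
  have key : (2 * ∑ v, (a v : ℝ) * b v : ℝ) ≤ C + (∑ v, (a v : ℝ)) * (∑ v, (b v : ℝ)) := by
    set T : ℝ := ∑ v, Real.sqrt (a v) * Real.sqrt (b v) with hT
    have hTnn : 0 ≤ T := Finset.sum_nonneg fun v _ =>
      mul_nonneg (Real.sqrt_nonneg _) (Real.sqrt_nonneg _)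
    have hCS : T ^ 2 ≤ (∑ v, (a v : ℝ)) * (∑ v, (b v : ℝ)) := by
      have := sum_mul_sq_le_sq_mul_sq Finset.univ
        (fun v => Real.sqrt (a v)) (fun v => Real.sqrt (b v))
      simpa [Real.sq_sqrt (Nat.cast_nonneg _)] using this
    have hS : (∑ v, (a v : ℝ) * b v) ≤ Real.sqrt C * T := by
      rw [hT, Finset.mul_sum]
      refine Finset.sum_le_sum fun v _ => ?_
      have h1 : (a v : ℝ) * b v = Real.sqrt ((a v : ℝ) * b v) * Real.sqrt ((a v : ℝ) * b v) := by
        exact (Real.mul_self_sqrt (by positivity)).symm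
      have h2 : Real.sqrt ((a v : ℝ) * b v) ≤ Real.sqrt C :=
        Real.sqrt_le_sqrt (by exact_mod_cast h v)
      calc (a v : ℝ) * b v = Real.sqrt ((a v : ℝ) * b v) * Real.sqrt ((a v : ℝ) * b v) := h1
        _ ≤ Real.sqrt C * Real.sqrt ((a v : ℝ) * b v) := by
            apply mul_le_mul_of_nonneg_right h2 (Real.sqrt_nonneg _)
        _ = Real.sqrt C * (Real.sqrt (a v) * Real.sqrt (b v)) := by
            rw [Real.sqrt_mul (Nat.cast_nonneg _)]
    have hSnn : (0:ℝ) ≤ ∑ v, (a v : ℝ) * b v :=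
      Finset.sum_nonneg fun v _ => by positivity
    have hsqC : Real.sqrt C ^ 2 = (C : ℝ) := Real.sq_sqrt (Nat.cast_nonneg _)
    nlinarith [sq_nonneg (Real.sqrt C * T - (∑ v, (a v : ℝ) * b v)),
      sq_nonneg ((C : ℝ) - (∑ v, (a v : ℝ)) * (∑ v, (b v : ℝ))),
      sq_nonneg (Real.sqrt C), Real.sqrt_nonneg (C : ℝ),
      mul_le_mul_of_nonneg_left hCS (sq_nonneg (Real.sqrt C)),
      sq_nonneg ((C:ℝ) + (∑ v, (a v : ℝ)) * (∑ v, (b v : ℝ)) - 2 * ∑ v, (a v : ℝ) * b v)]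
  exact_mod_cast key

/-- For the characteristic function `f` of a linear code of length `n` and a
rectangle `r = ρ₁ ∧ ρ₂` with at least as many true positives as false positives
on `f`, the discrepancy of `f` on `r` is at most `|r_core⁻¹(1)|/2^n` where
`r_core = σ₁ ∧ σ₂` is a core rectangle of `r` w.r.t. `f`. -/
theorem discrepancy_le_core (m n : ℕ) (H : Matrix (Fin m) (Fin n) (ZMod 2))
    (X₁ : Finset (Fin n)) (ρ₁ ρ₂ σ₁ σ₂ : (Fin n → ZMod 2) → Bool)
    (hdepρ₁ : ∀ x y, (∀ i ∈ X₁, x i = y i) → ρ₁ x = ρ₁ y)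
    (hdepρ₂ : ∀ x y, (∀ i ∉ X₁, x i = y i) → ρ₂ x = ρ₂ y)
    (hdepσ₁ : ∀ x y, (∀ i ∈ X₁, x i = y i) → σ₁ x = σ₁ y)
    (hdepσ₂ : ∀ x y, (∀ i ∉ X₁, x i = y i) → σ₂ x = σ₂ y)
    (hTP : (Finset.univ.filter fun x =>
        (ρ₁ x = true ∧ ρ₂ x = true) ∧ H.mulVec x ≠ 0).card ≤
      (Finset.univ.filter fun x =>
        (ρ₁ x = true ∧ ρ₂ x = true) ∧ H.mulVec x = 0).card)
    (hcore_entails : ∀ x, σ₁ x = true → σ₂ x = true →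
      (ρ₁ x = true ∧ ρ₂ x = true) ∧ H.mulVec x = 0)
    (hcore_max : ∀ τ₁ τ₂ : (Fin n → ZMod 2) → Bool,
      (∀ x y, (∀ i ∈ X₁, x i = y i) → τ₁ x = τ₁ y) →
      (∀ x y, (∀ i ∉ X₁, x i = y i) → τ₂ x = τ₂ y) →
      (∀ x, τ₁ x = true → τ₂ x = true →
        (ρ₁ x = true ∧ ρ₂ x = true) ∧ H.mulVec x = 0) →
      (Finset.univ.filter fun x => τ₁ x = true ∧ τ₂ x = true).card ≤
        (Finset.univ.filter fun x => σ₁ x = true ∧ σ₂ x = true).card) :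
    |((Finset.univ.filter fun x =>
          (ρ₁ x = true ∧ ρ₂ x = true) ∧ H.mulVec x = 0).card : ℝ) -
        ((Finset.univ.filter fun x =>
          (ρ₁ x = true ∧ ρ₂ x = true) ∧ H.mulVec x ≠ 0).card : ℝ)| / 2 ^ n ≤
      ((Finset.univ.filter fun x => σ₁ x = true ∧ σ₂ x = true).card : ℝ) / 2 ^ n := by
  classical
  set TP := Finset.univ.filter fun x => (ρ₁ x = true ∧ ρ₂ x = true) ∧ H.mulVec x = 0 with hTPdef
  set FP := Finset.univ.filter (fun x => (ρ₁ x = true ∧ ρ₂ x = true) ∧ H.mulVec x ≠ 0) with hFPdef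
  set CO := Finset.univ.filter fun x => σ₁ x = true ∧ σ₂ x = true with hCOdef
  set A := TP.image (pr1 X₁) with hAdef
  set B := TP.image (pr2 X₁) with hBdef
  -- shape facts
  have hAshape : ∀ a ∈ A, pr1 X₁ a = a ∧ pr2 X₁ a = 0 := by
    intro a ha
    obtain ⟨x, _, rfl⟩ := Finset.mem_image.mp ha
    exact ⟨pr1_pr1 X₁ x, pr2_pr1 X₁ x⟩
  have hBshape : ∀ b ∈ B, pr1 X₁ b = 0 ∧ pr2 X₁ b = b := by
    intro b hb
    obtain ⟨x, _, rfl⟩ := Finset.mem_image.mp hb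
    exact ⟨pr1_pr2 X₁ x, pr2_pr2 X₁ x⟩
  -- rectangle fact: sums of A-parts and B-parts satisfy ρ
  have hrect : ∀ a ∈ A, ∀ b ∈ B, ρ₁ (a + b) = true ∧ ρ₂ (a + b) = true := by
    intro a ha b hb
    obtain ⟨x, hx, hxa⟩ := Finset.mem_image.mp ha
    obtain ⟨y, hy, hyb⟩ := Finset.mem_image.mp hb
    have hxTP := (Finset.mem_filter.mp hx).2
    have hyTP := (Finset.mem_filter.mp hy).2
    constructor
    · have hag : ∀ i ∈ X₁, (a + b) i = x i := by
        intro i hi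
        have hbi : b i = 0 := by rw [← hyb]; simp [pr2, hi]
        have hai : a i = x i := by rw [← hxa]; simp [pr1, hi]
        simp [hai, hbi]
      rw [hdepρ₁ _ _ hag]
      exact hxTP.1.1
    · have hag : ∀ i ∉ X₁, (a + b) i = y i := by
        intro i hi
        have hbi : b i = y i := by rw [← hyb]; simp [pr2, hi]
        have hai : a i = 0 := by rw [← hxa]; simp [pr1, hi]
        simp [hai, hbi]
      rw [hdepρ₂ _ _ hag]
      exact hyTP.1.2
  have hcode : ∀ a b : Fin n → ZMod 2,
      H.mulVec (a + b) = 0 ↔ H.mulVec a = H.mulVec b := by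
    intro a b; rw [Matrix.mulVec_add]; exact zmod2_add_eq_zero _ _
  set P := (A ×ˢ B).filter (fun p => H.mulVec p.1 = H.mulVec p.2) with hPdef
  set N := (A ×ˢ B).filter (fun p => ¬ H.mulVec p.1 = H.mulVec p.2) with hNdef
  -- TP.card = P.card
  have hTPP : TP.card = P.card := by
    apply Finset.card_nbij' (fun x => (pr1 X₁ x, pr2 X₁ x)) (fun p => p.1 + p.2)
    · intro x hx
      have hx' := (Finset.mem_filter.mp hx).2
      refine Finset.mem_filter.mpr ⟨Finset.mem_product.mpr ⟨Finset.mem_image_of_mem _ hx,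
        Finset.mem_image_of_mem _ hx⟩, ?_⟩
      have := hx'.2
      rw [← pr1_add_pr2 X₁ x, hcode] at this
      exact this
    · intro p hp
      obtain ⟨hmem, heq⟩ := Finset.mem_filter.mp hp
      obtain ⟨hpa, hpb⟩ := Finset.mem_product.mp hmem
      refine Finset.mem_filter.mpr ⟨Finset.mem_univ _, hrect _ hpa _ hpb, ?_⟩
      rw [hcode]; exact heq
    · intro x _; exact pr1_add_pr2 X₁ x
    · intro p hp
      obtain ⟨hmem, _⟩ := Finset.mem_filter.mp hp
      obtain ⟨hpa, hpb⟩ := Finset.mem_product.mp hmem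
      have h1 := hAshape _ hpa
      have h2 := hBshape _ hpb
      show (pr1 X₁ (p.1 + p.2), pr2 X₁ (p.1 + p.2)) = p
      rw [Prod.ext_iff]
      constructor
      · rw [pr1_add, h1.1, h2.1, add_zero]
      · rw [pr2_add, h1.2, h2.2, zero_add]
  -- N.card ≤ FP.card
  have hNFP : N.card ≤ FP.card := by
    apply Finset.card_le_card_of_injOn (fun p => p.1 + p.2)
    · intro p hp
      obtain ⟨hmem, hne⟩ := Finset.mem_filter.mp hp
      obtain ⟨hpa, hpb⟩ := Finset.mem_product.mp hmem
      refine Finset.mem_filter.mpr ⟨Finset.mem_univ _, hrect _ hpa _ hpb, ?_⟩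
      intro h0
      exact hne ((hcode _ _).mp h0)
    · intro p hp q hq hpq
      have hp' := Finset.mem_filter.mp (Finset.mem_coe.mp hp)
      have hq' := Finset.mem_filter.mp (Finset.mem_coe.mp hq)
      obtain ⟨hpa, hpb⟩ := Finset.mem_product.mp hp'.1
      obtain ⟨hqa, hqb⟩ := Finset.mem_product.mp hq'.1
      have h1 := hAshape _ hpa
      have h2 := hBshape _ hpb
      have h3 := hAshape _ hqa
      have h4 := hBshape _ hqb
      have e1 : p.1 = q.1 := by
        have := congrArg (pr1 X₁) hpq
        rwa [pr1_add, pr1_add, h1.1, h2.1, h3.1, h4.1, add_zero, add_zero] at this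
      have e2 : p.2 = q.2 := by
        have := congrArg (pr2 X₁) hpq
        rwa [pr2_add, pr2_add, h1.2, h2.2, h3.2, h4.2, zero_add, zero_add] at this
      exact Prod.ext e1 e2
  -- fiber counts
  set a : (Fin m → ZMod 2) → ℕ := fun v => (A.filter fun y => H.mulVec y = v).card with hadef
  set b : (Fin m → ZMod 2) → ℕ := fun v => (B.filter fun y => H.mulVec y = v).card with hbdef
  have hAcard : A.card = ∑ v : Fin m → ZMod 2, a v :=
    Finset.card_eq_sum_card_fiberwise (fun x _ => Finset.mem_univ (H.mulVec x))
  have hBcard : B.card = ∑ v : Fin m → ZMod 2, b v :=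
    Finset.card_eq_sum_card_fiberwise (fun x _ => Finset.mem_univ (H.mulVec x))
  have hPcard : P.card = ∑ v : Fin m → ZMod 2, a v * b v := by
    rw [Finset.card_eq_sum_card_fiberwise
      (f := fun p : (Fin n → ZMod 2) × (Fin n → ZMod 2) => H.mulVec p.1)
      (t := Finset.univ) (fun x _ => Finset.mem_univ _)]
    refine Finset.sum_congr rfl fun v _ => ?_
    rw [hadef, hbdef, ← Finset.card_product]
    congr 1
    ext p
    simp only [Finset.mem_filter, Finset.mem_product, hPdef]
    constructor
    · rintro ⟨⟨⟨ha, hb⟩, heq⟩, hv⟩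
      exact ⟨⟨ha, hv⟩, hb, by rw [← heq]; exact hv⟩
    · rintro ⟨⟨ha, hv⟩, hb, hv'⟩
      exact ⟨⟨⟨ha, hb⟩, by rw [hv, hv']⟩, hv⟩
  -- per-value core bound
  have hvbound : ∀ v : Fin m → ZMod 2, a v * b v ≤ CO.card := by
    intro v
    set Av := A.filter (fun y => H.mulVec y = v) with hAvdef
    set Bv := B.filter (fun y => H.mulVec y = v) with hBvdef
    set τ₁ : (Fin n → ZMod 2) → Bool := fun x => decide (pr1 X₁ x ∈ Av) with hτ₁
    set τ₂ : (Fin n → ZMod 2) → Bool := fun x => decide (pr2 X₁ x ∈ Bv) with hτ₂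
    have hmax := hcore_max τ₁ τ₂
      (by intro x y hxy; simp only [hτ₁]; rw [pr1_eq_of_agree X₁ hxy])
      (by intro x y hxy; simp only [hτ₂]; rw [pr2_eq_of_agree X₁ hxy])
      (by
        intro x h1 h2
        simp only [hτ₁, decide_eq_true_eq] at h1
        simp only [hτ₂, decide_eq_true_eq] at h2
        obtain ⟨ha, hva⟩ := Finset.mem_filter.mp h1
        obtain ⟨hb, hvb⟩ := Finset.mem_filter.mp h2
        constructor
        · have := hrect _ ha _ hb
          rwa [pr1_add_pr2] at this
        · rw [← pr1_add_pr2 X₁ x, hcode, hva, hvb])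
    have hcc : (Finset.univ.filter fun x => τ₁ x = true ∧ τ₂ x = true).card
        = (Av ×ˢ Bv).card := by
      apply Finset.card_nbij' (fun x => (pr1 X₁ x, pr2 X₁ x)) (fun p => p.1 + p.2)
      · intro x hx
        have hx' := (Finset.mem_filter.mp hx).2
        simp only [hτ₁, hτ₂, decide_eq_true_eq] at hx'
        exact Finset.mem_product.mpr ⟨hx'.1, hx'.2⟩
      · intro p hp
        obtain ⟨hpa, hpb⟩ := Finset.mem_product.mp hp
        have h1 := hAshape _ (Finset.mem_filter.mp hpa).1
        have h2 := hBshape _ (Finset.mem_filter.mp hpb).1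
        refine Finset.mem_filter.mpr ⟨Finset.mem_univ _, ?_, ?_⟩
        · simp only [hτ₁, decide_eq_true_eq]
          rw [pr1_add, h1.1, h2.1, add_zero]; exact hpa
        · simp only [hτ₂, decide_eq_true_eq]
          rw [pr2_add, h1.2, h2.2, zero_add]; exact hpb
      · intro x _; exact pr1_add_pr2 X₁ x
      · intro p hp
        obtain ⟨hpa, hpb⟩ := Finset.mem_product.mp hp
        have h1 := hAshape _ (Finset.mem_filter.mp hpa).1
        have h2 := hBshape _ (Finset.mem_filter.mp hpb).1
        show (pr1 X₁ (p.1 + p.2), pr2 X₁ (p.1 + p.2)) = p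
        rw [Prod.ext_iff]
        constructor
        · rw [pr1_add, h1.1, h2.1, add_zero]
        · rw [pr2_add, h1.2, h2.2, zero_add]
    calc a v * b v = (Av ×ˢ Bv).card := by
          rw [Finset.card_product, hadef, hbdef, hAvdef, hBvdef]
      _ = (Finset.univ.filter fun x => τ₁ x = true ∧ τ₂ x = true).card := hcc.symm
      _ ≤ CO.card := hmax
  -- arithmetic
  have harith := two_mul_sum_le a b CO.card hvbound
  have hUnion : P ∪ N = A ×ˢ B := by
    ext p
    simp only [hPdef, hNdef, Finset.mem_union, Finset.mem_filter]
    tauto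
  have hDisj : Disjoint P N := by
    rw [Finset.disjoint_left]
    intro p hp hq
    exact (Finset.mem_filter.mp hq).2 (Finset.mem_filter.mp hp).2
  have hABsplit : A.card * B.card = P.card + N.card := by
    rw [← Finset.card_product, ← hUnion, Finset.card_union_of_disjoint hDisj]
  have hkey : TP.card ≤ CO.card + FP.card := by
    have h1 : 2 * P.card ≤ CO.card + (P.card + N.card) := by
      rw [← hABsplit, hPcard, hAcard, hBcard]; exact harith
    omega
  -- conclude in ℝ
  have habs : |((TP.card : ℝ)) - (FP.card : ℝ)| = (TP.card : ℝ) - FP.card :=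
    abs_of_nonneg (sub_nonneg.mpr (Nat.cast_le.mpr hTP))
  rw [habs]
  have hnum : (TP.card : ℝ) - FP.card ≤ CO.card := by
    have := hkey
    have h' : (TP.card : ℝ) ≤ CO.card + FP.card := by exact_mod_cast this
    linarith
  have hpow : (0:ℝ) < 2 ^ n := by positivity
  gcongr
end

section
/- Let f : F_2^n × F_2^n → F_2 be the bilinear form f(x,y) = xᵀAy for A ∈ F_2^{n×n}, and let r(x,y) = ρ₁(x) ∧ ρ₂(y) be a rectangle whose partition separates the x-variables from the y-variables. Then Disc(f, r) ≤ 2^{−rank(A)/2}. -/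
/-!
With `χ a = (-1) ^ a`, the discrepancy is `|∑_{x ∈ S₁, y ∈ S₂} χ (xᵀ A y)| / 4 ^ n`. Cauchy–Schwarz
in `x` bounds the square of this sum by `|S₁| · ∑_x (∑_{y ∈ S₂} χ (xᵀ A y)) ^ 2`; expanding the
square and summing the character over all `x` leaves `2 ^ n` times the number of pairs
`y, y' ∈ S₂` with `A y = A y'`. Each `y` has at most `|ker A| = 2 ^ (n - rank A)` such partners,
so the squared sum is at most `2 ^ (4 n - rank A)`.
-/

open Finset Matrix

theorem AddChar.sum_apply_dotProduct {R R' ι : Type*} [CommRing R] [Fintype R] [DecidableEq R]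
    [CommRing R'] [IsDomain R'] [Fintype ι] [DecidableEq ι] {ψ : AddChar R R'} (hψ : ψ.IsPrimitive)
    (v : ι → R) :
    ∑ x : ι → R, ψ (x ⬝ᵥ v) = if v = 0 then (Fintype.card R : R') ^ Fintype.card ι else 0 := by
  let φ : AddChar (ι → R) R' := ψ.compAddMonoidHom (dotProductBilin R R v).toAddMonoidHom
  have hφ : ∀ x, φ x = ψ (x ⬝ᵥ v) := fun x => by simp [φ, dotProductBilin, dotProduct_comm]
  have hφ_eq_zero : φ = 0 ↔ v = 0 := by
    refine ⟨fun h => ?_, fun h => by ext x; simp [hφ, h]⟩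
    by_contra hv
    obtain ⟨i, hi⟩ := Function.ne_iff.mp hv
    refine hψ hi ?_
    ext a
    simpa [hφ, mul_comm] using DFunLike.congr_fun h (Pi.single i a)
  simp_rw [← hφ, AddChar.sum_eq_ite, hφ_eq_zero, Fintype.card_fun, Nat.cast_pow]

theorem AddMonoidHom.card_filter_map_eq_map_le {G H F : Type*} [AddGroup G] [Fintype G]
    [AddMonoid H] [DecidableEq H] [FunLike F G H] [AddMonoidHomClass F G H] (f : F)
    (s : Finset G) : #{p ∈ s ×ˢ s | f p.1 = f p.2} ≤ #s * #{g | f g = 0} := by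
  calc #{p ∈ s ×ˢ s | f p.1 = f p.2}
      = ∑ y ∈ s, #{y' ∈ s | f y = f y'} := by
        rw [card_filter, sum_product]; simp only [card_filter]
    _ ≤ ∑ y ∈ s, #{y' | f y' = f y} :=
        sum_le_sum fun y _ => card_le_card fun y' => by simp +contextual [eq_comm]
    _ = #s * #{g | f g = 0} := by
        rw [sum_const_nat fun y _ => AddMonoidHom.card_fiber_eq_of_mem_range f ⟨y, rfl⟩
          ⟨0, map_zero f⟩]

theorem Matrix.card_mulVec_eq_zero_mul_pow_rank {K m n : Type*} [Field K] [Fintype K]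
    [DecidableEq K] [Fintype m] [Fintype n] [DecidableEq n] (A : Matrix m n K) :
    #{z | A *ᵥ z = 0} * Fintype.card K ^ A.rank = Fintype.card K ^ Fintype.card n := by
  classical
  have hker : #{z | A *ᵥ z = 0} = Fintype.card (LinearMap.ker A.mulVecLin) := by
    simp [Fintype.card_subtype, LinearMap.mem_ker]
  rw [hker, Module.card_eq_pow_finrank (K := K), Matrix.rank, ← pow_add, add_comm,
    LinearMap.finrank_range_add_finrank_ker, Module.finrank_fintype_fun_eq_card]

noncomputable def signChar : AddChar (ZMod 2) ℝ := AddChar.zmodChar 2 (ζ := (-1 : ℝ)) (by norm_num)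

theorem signChar_apply (a : ZMod 2) : signChar a = (-1) ^ a.val := rfl

theorem signChar_isPrimitive : signChar.IsPrimitive :=
  AddChar.zmodChar_primitive_of_primitive_root 2 (IsPrimitiveRoot.neg_one 0 (by norm_num))

theorem card_filter_eq_zero_sub_card_filter_eq_one {α : Type*} (s : Finset α) (f : α → ZMod 2) :
    (#{p ∈ s | f p = 0} : ℝ) - #{p ∈ s | f p = 1} = ∑ p ∈ s, signChar (f p) := by
  simp only [natCast_card_filter, ← sum_sub_distrib]
  refine sum_congr rfl fun p _ => ?_
  obtain h | h : f p = 0 ∨ f p = 1 := (by decide : ∀ a : ZMod 2, a = 0 ∨ a = 1) (f p)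
  all_goals simp [h, signChar_apply, ZMod.val_one]

theorem signChar_dotProduct_mul_signChar_dotProduct {κ : Type*} [Fintype κ] (x u w : κ → ZMod 2) :
    signChar (x ⬝ᵥ u) * signChar (x ⬝ᵥ w) = signChar (x ⬝ᵥ (u - w)) := by
  have hneg : -w = w := funext fun i => ZMod.neg_eq_self_mod_two (w i)
  rw [← AddChar.map_add_eq_mul, ← dotProduct_add, sub_eq_add_neg, hneg]

theorem sum_sq_sum_signChar_dotProduct {κ α : Type*} [Fintype κ] [DecidableEq κ]
    (s : Finset α) (v : α → κ → ZMod 2) :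
    ∑ x : κ → ZMod 2, (∑ y ∈ s, signChar (x ⬝ᵥ v y)) ^ 2
      = 2 ^ Fintype.card κ * #{p ∈ s ×ˢ s | v p.1 = v p.2} := by
  calc ∑ x : κ → ZMod 2, (∑ y ∈ s, signChar (x ⬝ᵥ v y)) ^ 2
      = ∑ x : κ → ZMod 2, ∑ p ∈ s ×ˢ s, signChar (x ⬝ᵥ (v p.1 - v p.2)) := by
        simp_rw [sq, sum_mul_sum, ← sum_product', signChar_dotProduct_mul_signChar_dotProduct]
    _ = ∑ p ∈ s ×ˢ s, if v p.1 = v p.2 then (2 : ℝ) ^ Fintype.card κ else 0 := by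
        rw [sum_comm]
        simp_rw [AddChar.sum_apply_dotProduct signChar_isPrimitive, sub_eq_zero, ZMod.card]
        norm_num
    _ = 2 ^ Fintype.card κ * #{p ∈ s ×ˢ s | v p.1 = v p.2} := by
        rw [← sum_filter, sum_const, nsmul_eq_mul, mul_comm]

theorem sq_sum_signChar_rect_mul_pow_rank_le {m n : Type*} [Fintype m] [DecidableEq m]
    [Fintype n] [DecidableEq n] (A : Matrix m n (ZMod 2)) (S₁ : Finset (m → ZMod 2))
    (S₂ : Finset (n → ZMod 2)) :
    (∑ x ∈ S₁, ∑ y ∈ S₂, signChar (x ⬝ᵥ A *ᵥ y)) ^ 2 * 2 ^ A.rank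
      ≤ #S₁ * 2 ^ Fintype.card m * (#S₂ * 2 ^ Fintype.card n) := by
  have hcollisions : #{p ∈ S₂ ×ˢ S₂ | A *ᵥ p.1 = A *ᵥ p.2} * 2 ^ A.rank
      ≤ #S₂ * 2 ^ Fintype.card n := by
    have hker := A.card_mulVec_eq_zero_mul_pow_rank
    rw [ZMod.card] at hker
    calc #{p ∈ S₂ ×ˢ S₂ | A *ᵥ p.1 = A *ᵥ p.2} * 2 ^ A.rank
        ≤ #S₂ * #{z | A *ᵥ z = 0} * 2 ^ A.rank :=
          Nat.mul_le_mul_right _ (AddMonoidHom.card_filter_map_eq_map_le A.mulVecLin S₂)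
      _ = #S₂ * 2 ^ Fintype.card n := by rw [mul_assoc, hker]
  calc (∑ x ∈ S₁, ∑ y ∈ S₂, signChar (x ⬝ᵥ A *ᵥ y)) ^ 2 * 2 ^ A.rank
      ≤ #S₁ * (∑ x ∈ S₁, (∑ y ∈ S₂, signChar (x ⬝ᵥ A *ᵥ y)) ^ 2) * 2 ^ A.rank := by
        gcongr
        exact sq_sum_le_card_mul_sum_sq
    _ ≤ #S₁ * (∑ x, (∑ y ∈ S₂, signChar (x ⬝ᵥ A *ᵥ y)) ^ 2) * 2 ^ A.rank := by
        gcongr _ * ?_ * _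
        exact sum_le_univ_sum_of_nonneg fun x => sq_nonneg _
    _ = #S₁ * 2 ^ Fintype.card m * (#{p ∈ S₂ ×ˢ S₂ | A *ᵥ p.1 = A *ᵥ p.2} * 2 ^ A.rank) := by
        rw [sum_sq_sum_signChar_dotProduct]
        ring
    _ ≤ #S₁ * 2 ^ Fintype.card m * (#S₂ * 2 ^ Fintype.card n) := by
        gcongr _ * ?_
        exact_mod_cast hcollisions

theorem abs_div_le_rpow_neg_half_of_sq_mul_pow_le {b c D : ℝ} {r : ℕ} (hb : 0 < b) (hD : 0 < D)
    (h : c ^ 2 * b ^ r ≤ D ^ 2) : |c| / D ≤ b ^ (-(r : ℝ) / 2) := by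
  have hsq : (b ^ (-(r : ℝ) / 2)) ^ 2 = (b ^ r)⁻¹ := by
    rw [← Real.rpow_natCast, ← Real.rpow_mul hb.le, ← Real.rpow_natCast,
      ← Real.rpow_neg hb.le]
    ring_nf
  rw [div_le_iff₀ hD]
  refine abs_le_of_sq_le_sq ?_ (by positivity)
  rwa [mul_pow, hsq, mul_comm, ← div_eq_mul_inv, le_div_iff₀ (by positivity)]

/-- Discrepancy bound for bilinear forms: for `f(x,y) = xᵀAy` and a rectangle
`r(x,y) = ρ₁(x) ∧ ρ₂(y)` whose partition separates the `x`-variables from the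
`y`-variables, `Disc(f, r) ≤ 2^{−rank(A)/2}`. -/
theorem bilinear_discrepancy (n : ℕ) (A : Matrix (Fin n) (Fin n) (ZMod 2))
    (ρ₁ ρ₂ : (Fin n → ZMod 2) → Bool) :
    |((Finset.univ.filter fun p : (Fin n → ZMod 2) × (Fin n → ZMod 2) =>
          ρ₁ p.1 = true ∧ ρ₂ p.2 = true ∧ dotProduct p.1 (A.mulVec p.2) = 1).card : ℝ) -
        ((Finset.univ.filter fun p : (Fin n → ZMod 2) × (Fin n → ZMod 2) =>
          ρ₁ p.1 = true ∧ ρ₂ p.2 = true ∧ dotProduct p.1 (A.mulVec p.2) = 0).card : ℝ)|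
      / 2 ^ (2 * n) ≤ (2 : ℝ) ^ (-(A.rank : ℝ) / 2) := by
  set S₁ : Finset (Fin n → ZMod 2) := {x | ρ₁ x = true}
  set S₂ : Finset (Fin n → ZMod 2) := {y | ρ₂ y = true}
  have hrect (c : ZMod 2) :
      (univ.filter fun p : (Fin n → ZMod 2) × (Fin n → ZMod 2) =>
        ρ₁ p.1 = true ∧ ρ₂ p.2 = true ∧ p.1 ⬝ᵥ A *ᵥ p.2 = c)
        = {p ∈ S₁ ×ˢ S₂ | p.1 ⬝ᵥ A *ᵥ p.2 = c} := by
    ext p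
    simp [S₁, S₂, and_assoc]
  have hcard (S : Finset (Fin n → ZMod 2)) : (#S : ℝ) ≤ 2 ^ n := by
    exact_mod_cast (card_le_univ S).trans_eq (by simp)
  rw [hrect, hrect, abs_sub_comm, card_filter_eq_zero_sub_card_filter_eq_one, sum_product]
  refine abs_div_le_rpow_neg_half_of_sq_mul_pow_le two_pos (by positivity) ?_
  calc (∑ x ∈ S₁, ∑ y ∈ S₂, signChar (x ⬝ᵥ A *ᵥ y)) ^ 2 * 2 ^ A.rank
      ≤ #S₁ * 2 ^ n * (#S₂ * 2 ^ n) := by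
        simpa using sq_sum_signChar_rect_mul_pow_rank_le A S₁ S₂
    _ ≤ 2 ^ n * 2 ^ n * (2 ^ n * 2 ^ n) := by gcongr <;> apply hcard
    _ = (2 ^ (2 * n)) ^ 2 := by ring
end
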